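/- arXiv:2005.07975 — 2 statements merged into one kernel-verified Lean document; each statement's English description precedes it below -/
import Mathlib

section
/- Let G be a topological group and B ⊆ A two subgroups of G such that the coset space A/B is finite. Then the coset space of the closures, cl(A)/cl(B), is also finite; in fact its cardinality is at most that of A/B. -/
/-!
If `A` is covered by finitely many cosets `t B` with `t ∈ A`, then the finite union of the
closed sets `t cl(B)` is closed and contains `A`, hence contains `cl(A)`. So every coset of
`cl(B)` in `cl(A)` is of the form `t cl(B)`, and `A / B → cl(A) / cl(B)` is onto.
-/

open scoped Pointwise

namespace Subgroup

variable {G : Type*} [Group G]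

theorem exists_finite_subset_mul_of_finite_quotient (A B : Subgroup G)
    [Finite (A ⧸ B.subgroupOf A)] :
    ∃ T : Set G, T.Finite ∧ T ⊆ A ∧ (A : Set G) ⊆ T * B := by
  refine ⟨Set.range fun q : A ⧸ B.subgroupOf A ↦ ((q.out : A) : G), Set.finite_range _,
    ?_, ?_⟩
  · rintro _ ⟨q, rfl⟩
    exact q.out.2
  · intro x hx
    obtain ⟨b, hb⟩ := QuotientGroup.mk_out_eq_mul (B.subgroupOf A) ⟨x, hx⟩
    refine ⟨_, ⟨QuotientGroup.mk ⟨x, hx⟩, rfl⟩, ((b⁻¹ : B.subgroupOf A) : G), (b⁻¹).2, ?_⟩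
    simp [hb]

theorem surjective_quotientSubgroupOfMapOfLE_comp_quotientSubgroupOfEmbeddingOfLE
    {A A' B B' : Subgroup G} (hA : A ≤ A') (hB : B ≤ B') (hcover : (A' : Set G) ⊆ A * B') :
    Function.Surjective
      (quotientSubgroupOfMapOfLE A' hB ∘ quotientSubgroupOfEmbeddingOfLE B hA) := by
  intro y
  induction y using QuotientGroup.induction_on with
  | H x =>
    obtain ⟨a, ha, b, hb, hab⟩ := hcover x.2
    refine ⟨QuotientGroup.mk ⟨a, ha⟩, ?_⟩
    simp only [Function.comp_apply, quotientSubgroupOfEmbeddingOfLE_apply_mk,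
      quotientSubgroupOfMapOfLE_apply_mk, QuotientGroup.eq, mem_subgroupOf]
    simpa [← hab] using hb

end Subgroup

theorem Set.Finite.closure_subset_mul_closure {G : Type*} [Group G] [TopologicalSpace G]
    [IsTopologicalGroup G] {T U V : Set G} (hT : T.Finite) (hU : U ⊆ T * V) :
    closure U ⊆ T * closure V :=
  closure_minimal (hU.trans (Set.mul_subset_mul_left subset_closure))
    (isClosed_closure.mul_left_of_isCompact hT.isCompact)

theorem closure_coset_space_finite_general {G : Type*} [Group G] [TopologicalSpace G]
    [IsTopologicalGroup G] (A B : Subgroup G)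
    (hfin : Finite (A ⧸ B.subgroupOf A)) :
    Finite (A.topologicalClosure ⧸
      (B.topologicalClosure.subgroupOf A.topologicalClosure)) ∧
    Nat.card (A.topologicalClosure ⧸
      (B.topologicalClosure.subgroupOf A.topologicalClosure)) ≤
      Nat.card (A ⧸ B.subgroupOf A) := by
  obtain ⟨T, hT, hTA, hAT⟩ := A.exists_finite_subset_mul_of_finite_quotient B
  have hcover : (A.topologicalClosure : Set G) ⊆ A * B.topologicalClosure :=
    (hT.closure_subset_mul_closure hAT).trans (Set.mul_subset_mul_right hTA)
  have hsurj :=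
    Subgroup.surjective_quotientSubgroupOfMapOfLE_comp_quotientSubgroupOfEmbeddingOfLE
      A.le_topologicalClosure B.le_topologicalClosure hcover
  exact ⟨Finite.of_surjective _ hsurj, Nat.card_le_card_of_surjective _ hsurj⟩

/-- Let `B ⊆ A` be subgroups of a topological group `G` with finitely many cosets of `B`
in `A`. Then the coset space `cl(A)/cl(B)` of the topological closures is also finite,
with cardinality at most that of `A/B`. -/
theorem closure_coset_space_finite {G : Type*} [Group G] [TopologicalSpace G]
    [IsTopologicalGroup G] (A B : Subgroup G) (hBA : B ≤ A)
    (hfin : Finite (A ⧸ B.subgroupOf A)) :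
    Finite (A.topologicalClosure ⧸
      (B.topologicalClosure.subgroupOf A.topologicalClosure)) ∧
    Nat.card (A.topologicalClosure ⧸
      (B.topologicalClosure.subgroupOf A.topologicalClosure)) ≤
      Nat.card (A ⧸ B.subgroupOf A) :=
  closure_coset_space_finite_general A B hfin
end

section
/- Let G be a simply connected Lie group and H ⊆ G a closed subgroup. Any continuous group homomorphism φ: H → (ℝ_{>0}, ·) admits a continuous extension m: G → ℝ_{>0} satisfying m(hy) = φ(h)·m(y) for all h ∈ H and y ∈ G, provided the identity component H_e lies in the kernel of φ and the quotient H\G is a compact manifold. -/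
/-!
With `ψ = log φ`, it suffices to find a continuous `F : G → ℝ` with `F (h * g) = ψ h + F g`;
then `m = exp (F - F 1)`. Such an `F` is the centre of mass of a family of compactly supported
bumps `k g` on `ℝ`, continuous in `g`, with `k (h * g) t = k g (t - ψ h)`. We take
`k g t = ∑ x ∈ T, ⨆ h : H, b x (h * g) * tent (t + ψ h)`: by compactness of `G ⧸ H`, finitely
many translates of a small neighbourhood cover `G` modulo `H`, and `b x` is a bump around the
`x`-th one, so small that all `h` contributing to the supremum have `ψ`-values within `1` of
each other. The supremum over the non-compact `H` is continuous in `g` because each `b x` is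
uniformly continuous for the left uniformity, being a distance bump for a pseudometric on a
countably generated coarsening of that uniformity (Birkhoff–Kakutani).
-/

open Set Filter Topology Uniformity MeasureTheory SetRel

noncomputable def tent (t : ℝ) : ℝ := max (1 - |t|) 0

lemma tent_mem_Icc (t : ℝ) : tent t ∈ Icc 0 1 :=
  ⟨le_max_right _ _, max_le (by linarith [abs_nonneg t]) zero_le_one⟩

@[simp] lemma tent_zero : tent 0 = 1 := by simp [tent]

lemma abs_lt_one_of_tent_ne_zero {t : ℝ} (ht : tent t ≠ 0) : |t| < 1 := by
  by_contra! h
  exact ht (max_eq_right (by linarith))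

lemma lipschitzWith_tent : LipschitzWith 1 tent := LipschitzWith.of_dist_le_mul fun s t => by
  simp only [tent, Real.dist_eq, NNReal.coe_one, one_mul]
  refine (abs_max_sub_max_le_abs _ _ _).trans ?_
  rw [sub_sub_sub_cancel_left, abs_sub_comm]
  exact abs_abs_sub_abs_le_abs_sub s t

section UniformSpace

variable {X : Type*}

lemma Metric.exists_uniformContinuous_eq_one_on [PseudoMetricSpace X] {S : Set X}
    (hS : S.Nonempty) {r : ℝ} (hr : 0 < r) :
    ∃ f : X → ℝ, UniformContinuous f ∧ (∀ x, f x ∈ Icc 0 1) ∧ (∀ s ∈ S, f s = 1) ∧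
      ∀ x, f x ≠ 0 → ∃ s ∈ S, dist s x < r := by
  refine ⟨fun x => tent (r⁻¹ * infDist x S), ?_, fun x => tent_mem_Icc _,
    fun s hs => by simp [infDist_zero_of_mem hs], fun x hx => ?_⟩
  · exact lipschitzWith_tent.uniformContinuous.comp
      ((uniformContinuous_const_smul r⁻¹).comp (lipschitz_infDist_pt S).uniformContinuous)
  · have h := abs_lt_one_of_tent_ne_zero hx
    rw [abs_of_nonneg (mul_nonneg (inv_nonneg.2 hr.le) infDist_nonneg), inv_mul_lt_iff₀ hr,
      mul_one, infDist_lt_iff hS] at h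
    obtain ⟨s, hs, hxs⟩ := h
    exact ⟨s, hs, by rwa [dist_comm]⟩

lemma exists_countablyGenerated_uniformSpace_ge [U : UniformSpace X] {E : SetRel X X}
    (hE : E ∈ 𝓤 X) :
    ∃ u : UniformSpace X, U ≤ u ∧ (@uniformity X u).IsCountablyGenerated ∧
      E ∈ @uniformity X u := by
  choose! half half_mem half_symm half_comp using fun s (hs : s ∈ 𝓤 X) =>
    comp_symm_mem_uniformity_sets hs
  set D : ℕ → SetRel X X := fun n => half^[n + 1] E
  have hD_succ : ∀ n, D (n + 1) = half (D n) := fun n => Function.iterate_succ_apply' _ _ _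
  have hD_mem : ∀ n, D n ∈ 𝓤 X := fun n => by
    induction n with
    | zero => exact half_mem E hE
    | succ n ih => rw [hD_succ]; exact half_mem _ ih
  have hD_comp : ∀ n, D (n + 1) ○ D (n + 1) ⊆ D n := fun n => by
    rw [hD_succ]; exact half_comp _ (hD_mem n)
  have hD_symm : ∀ n, (D n).IsSymm := fun n => by
    cases n with
    | zero => exact half_symm E hE
    | succ n => rw [hD_succ]; exact half_symm _ (hD_mem n)
  have hD_anti : Antitone D := antitone_nat_of_succ_le fun n =>
    have := isRefl_of_mem_uniformity (hD_mem (n + 1))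
    left_subset_comp.trans (hD_comp n)
  have hmem : ∀ r, r ∈ ⨅ n, 𝓟 (D n) ↔ ∃ n, D n ⊆ r := fun r =>
    (hasBasis_iInf_principal hD_anti.directed_ge).mem_iff.trans (by simp)
  refine ⟨.ofCore (.mk' (⨅ n, 𝓟 (D n)) ?_ ?_ ?_), ?_, isCountablyGenerated_seq _, ?_⟩
  · rintro r hr x
    obtain ⟨n, hn⟩ := (hmem r).1 hr
    have := isRefl_of_mem_uniformity (hD_mem n)
    exact hn (SetRel.rfl _)
  · rintro r hr
    obtain ⟨n, hn⟩ := (hmem r).1 hr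
    exact (hmem _).2 ⟨n, fun p hp => hn ((hD_symm n).symm _ _ hp)⟩
  · rintro r hr
    obtain ⟨n, hn⟩ := (hmem r).1 hr
    exact ⟨D (n + 1), (hmem _).2 ⟨n + 1, subset_rfl⟩, (hD_comp n).trans hn⟩
  · exact UniformSpace.le_def.2 (le_iInf fun n => le_principal_iff.2 (hD_mem n))
  · have := isRefl_of_mem_uniformity (half_mem E hE)
    exact (hmem E).2 ⟨0, (left_subset_comp (S := half E)).trans (half_comp E hE)⟩

theorem exists_uniformContinuous_eq_one_on [U : UniformSpace X] (S : Set X) {E : SetRel X X}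
    (hE : E ∈ 𝓤 X) :
    ∃ f : X → ℝ, UniformContinuous f ∧ (∀ x, f x ∈ Icc 0 1) ∧ (∀ s ∈ S, f s = 1) ∧
      ∀ x, f x ≠ 0 → ∃ s ∈ S, (s, x) ∈ E := by
  rcases S.eq_empty_or_nonempty with rfl | hS
  · exact ⟨0, uniformContinuous_const, by simp, by simp, by simp⟩
  obtain ⟨u, hUu, hcg, hEu⟩ := exists_countablyGenerated_uniformSpace_ge hE
  obtain ⟨I, hI⟩ := @UniformSpace.metrizable_uniformity X u hcg
  rw [← hI] at hEu hUu
  obtain ⟨r, hr, hrE⟩ := (@Metric.mem_uniformity_dist X I E).1 hEu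
  obtain ⟨f, hf_uc, hf01, hf1, hf_supp⟩ :=
    @Metric.exists_uniformContinuous_eq_one_on X I S hS r hr
  refine ⟨f, ?_, hf01, hf1, fun x hx => ?_⟩
  · exact @UniformContinuous.comp X X ℝ U I.toUniformSpace _ f id hf_uc
      (le_iff_uniformContinuous_id.1 hUu)
  · obtain ⟨s, hs, hsx⟩ := hf_supp x hx
    exact ⟨s, hs, hrE hsx⟩

end UniformSpace

lemma abs_ciSup_sub_ciSup_le {ι : Sort*} [Nonempty ι] {a b : ι → ℝ}
    (ha : BddAbove (range a)) (hb : BddAbove (range b)) {ε : ℝ} (h : ∀ i, |a i - b i| ≤ ε) :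
    |(⨆ i, a i) - ⨆ i, b i| ≤ ε := by
  rw [abs_sub_le_iff, sub_le_iff_le_add, sub_le_iff_le_add]
  constructor
  · exact ciSup_le fun i => by linarith [le_ciSup hb i, (abs_le.1 (h i)).2]
  · exact ciSup_le fun i => by linarith [le_ciSup ha i, (abs_le.1 (h i)).1]

lemma tendstoUniformly_finsetSum {ι α β : Type*} {l : Filter β} (s : Finset ι)
    {F : ι → β → α → ℝ} {f : ι → α → ℝ} (h : ∀ i ∈ s, TendstoUniformly (F i) (f i) l) :
    TendstoUniformly (fun b a => ∑ i ∈ s, F i b a) (fun a => ∑ i ∈ s, f i a) l := by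
  classical
  induction s using Finset.induction_on with
  | empty => simpa using (tendsto_const_nhds (x := (0 : ℝ)) (f := l)).tendstoUniformly_const
  | insert i s hi ih =>
    simp only [Finset.sum_insert hi]
    exact (h i (s.mem_insert_self i)).add (ih fun j hj => h j (Finset.mem_insert_of_mem hj))

noncomputable def centerOfMass (f : ℝ → ℝ) : ℝ := (∫ t, t * f t) / ∫ t, f t

lemma centerOfMass_comp_sub {f : ℝ → ℝ} (hf : Integrable f)
    (htf : Integrable fun t => t * f t) (hf₀ : ∫ t, f t ≠ 0) (c : ℝ) :
    centerOfMass (fun t => f (t - c)) = centerOfMass f + c := by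
  have hmoment : ∫ t, t * f (t - c) = (∫ t, t * f t) + c * ∫ t, f t := by
    calc ∫ t, t * f (t - c) = ∫ t, (t - c + c) * f (t - c) := by simp
      _ = ∫ t, (t + c) * f t := integral_sub_right_eq_self (fun t => (t + c) * f t) c
      _ = (∫ t, t * f t) + c * ∫ t, f t := by
        simp_rw [add_mul]
        rw [integral_add htf (hf.const_mul c), integral_const_mul]
  rw [centerOfMass, centerOfMass, hmoment, integral_sub_right_eq_self f c]
  field_simp

lemma integrable_mul_of_abs_le {f p : ℝ → ℝ} (hp : Continuous p) (hf : Continuous f) {R : ℝ}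
    (hR : ∀ t, f t ≠ 0 → |t| ≤ R) : Integrable fun t => p t * f t :=
  (hp.mul hf).integrable_of_hasCompactSupport <|
    HasCompactSupport.intro (isCompact_Icc (a := -R) (b := R)) fun t ht => by
      by_contra hne
      exact ht (abs_le.1 (hR t (right_ne_zero_of_mul hne)))

lemma continuous_integral_mul {X : Type*} [TopologicalSpace X] {k : X → ℝ → ℝ} {p : ℝ → ℝ}
    (hp : Continuous p) (hk : ∀ x, Continuous (k x))
    (hk_unif : ∀ x₀, TendstoUniformly k (k x₀) (𝓝 x₀))
    (hk_supp : ∀ x₀, ∃ R, ∀ᶠ x in 𝓝 x₀, ∀ t, k x t ≠ 0 → |t| ≤ R) :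
    Continuous fun x => ∫ t, p t * k x t := by
  refine continuous_iff_continuousAt.2 fun x₀ => Metric.continuousAt_iff'.2 fun ε hε => ?_
  obtain ⟨R, hR⟩ := hk_supp x₀
  set M := ∫ t in Icc (-R) R, |p t|
  have hM : 0 ≤ M := setIntegral_nonneg measurableSet_Icc fun t _ => abs_nonneg _
  have hδ : 0 < ε / (M + 1) := by positivity
  filter_upwards [hR, Metric.tendstoUniformly_iff.1 (hk_unif x₀) _ hδ] with x hxR hxδ
  have hint : ∀ y, (∀ t, k y t ≠ 0 → |t| ≤ R) → Integrable fun t => p t * k y t :=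
    fun y hy => integrable_mul_of_abs_le hp (hk y) hy
  rw [Real.dist_eq, ← integral_sub (hint x hxR) (hint x₀ hR.self_of_nhds)]
  have hbound : ∀ t, ‖p t * k x t - p t * k x₀ t‖ ≤
      (Icc (-R) R).indicator (fun t => |p t| * (ε / (M + 1))) t := fun t => by
    rw [← mul_sub, Real.norm_eq_abs, abs_mul]
    by_cases ht : t ∈ Icc (-R) R
    · rw [indicator_of_mem ht, abs_sub_comm]
      exact mul_le_mul_of_nonneg_left (hxδ t).le (abs_nonneg _)
    · have hzero : ∀ y, (∀ t, k y t ≠ 0 → |t| ≤ R) → k y t = 0 := fun y hy => by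
        by_contra hne
        exact ht (abs_le.1 (hy t hne))
      rw [indicator_of_notMem ht, hzero x hxR, hzero x₀ hR.self_of_nhds, sub_zero, abs_zero,
        mul_zero]
  refine (norm_integral_le_of_norm_le
    ((Continuous.integrableOn_Icc (f := fun t => |p t| * (ε / (M + 1))) (by fun_prop))
      |>.integrable_indicator measurableSet_Icc) (ae_of_all _ hbound)).trans_lt ?_
  rw [integral_indicator measurableSet_Icc, integral_mul_const, mul_div_assoc',
    div_lt_iff₀ (by positivity)]
  nlinarith

lemma Subgroup.exists_nhds_one_abs_le_one {G : Type*} [Group G] [TopologicalSpace G]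
    {H : Subgroup G} {ψ : H → ℝ} (hψc : Continuous ψ) (hψ1 : ψ 1 = 0) :
    ∃ W ∈ 𝓝 (1 : G), ∀ h : H, (h : G) ∈ W → |ψ h| ≤ 1 := by
  have : ψ ⁻¹' Icc (-1) 1 ∈ 𝓝 (1 : H) :=
    hψc.continuousAt.preimage_mem_nhds
      (Icc_mem_nhds (by rw [hψ1]; norm_num) (by rw [hψ1]; norm_num))
  obtain ⟨W, hW, hWψ⟩ := (mem_nhds_subtype _ _ _).1 this
  exact ⟨W, hW, fun h hh => abs_le.2 (hWψ hh)⟩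

section TopologicalGroup

variable {G : Type*} [Group G] [TopologicalSpace G] [IsTopologicalGroup G]

lemma inv_mul_mem_nhds_of_mem_nhds_one {U : Set G} (hU : U ∈ 𝓝 1) (g₀ : G) :
    {g | g₀⁻¹ * g ∈ U} ∈ 𝓝 g₀ :=
  (continuous_const.mul continuous_id).continuousAt.preimage_mem_nhds (by simpa using hU)

lemma Subgroup.exists_finset_mul_mem (H : Subgroup G) [CompactSpace (G ⧸ H)] {W : Set G}
    (hW : IsOpen W) (hW1 : (1 : G) ∈ W) :
    ∃ T : Finset G, ∀ g, ∃ x ∈ T, ∃ h : H, (h : G) * g * x ∈ W := by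
  obtain ⟨T, hT⟩ := isCompact_univ.elim_finite_subcover
    (fun x : G => ((↑) : G → G ⧸ H) '' ((x * ·) '' W⁻¹))
    (fun x => QuotientGroup.isOpenMap_coe _ (isOpenMap_mul_left x _ hW.inv))
    fun q _ => by
      obtain ⟨g, rfl⟩ := QuotientGroup.mk_surjective q
      exact mem_iUnion.2 ⟨g, g, ⟨1, by simpa using hW1, mul_one g⟩, rfl⟩
  refine ⟨T, fun g => ?_⟩
  obtain ⟨x, hx, _, ⟨v, hv, rfl⟩, hvg⟩ := mem_iUnion₂.1 (hT (mem_univ ((g⁻¹ : G) : G ⧸ H)))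
  refine ⟨x, hx, ⟨_, QuotientGroup.eq.1 hvg⟩, ?_⟩
  simpa [mul_assoc] using hv

lemma Subgroup.exists_finset_cover_nhds_one (H : Subgroup G) [CompactSpace (G ⧸ H)]
    {W₀ : Set G} (hW₀ : W₀ ∈ 𝓝 1) :
    ∃ (W : Set G) (T : Finset G), (∀ g, ∃ x ∈ T, ∃ h : H, (h : G) * g * x ∈ W) ∧
      ∃ U ∈ 𝓝 (1 : G), ∀ x ∈ T, ∀ s s', s * x ∈ W → s' * x ∈ W →
        ∀ u₁ ∈ U, ∀ u₂ ∈ U, ∀ u₃ ∈ U, ∀ u₄ ∈ U, s * (u₁ * u₂⁻¹ * u₃ * u₄⁻¹) * s'⁻¹ ∈ W₀ := by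
  obtain ⟨V, hV, hVW₀⟩ := exists_nhds_one_split4 hW₀
  set W := interior (V ∩ V⁻¹)
  have hW1 : (1 : G) ∈ W := mem_interior_iff_mem_nhds.2 (inter_mem hV (inv_mem_nhds_one G hV))
  obtain ⟨T, hT⟩ := H.exists_finset_mul_mem isOpen_interior hW1
  have hconj : (⋂ x ∈ T, {m : G | x⁻¹ * m * x ∈ W}) ∈ 𝓝 (1 : G) :=
    (biInter_finset_mem T).2 fun x _ =>
      (by fun_prop : Continuous fun m : G => x⁻¹ * m * x).continuousAt.preimage_mem_nhds
        (by rw [mul_one, inv_mul_cancel]; exact isOpen_interior.mem_nhds hW1)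
  obtain ⟨V', hV', hV'conj⟩ := exists_nhds_one_split4 hconj
  refine ⟨W, T, hT, V' ∩ V'⁻¹, inter_mem hV' (inv_mem_nhds_one G hV'),
    fun x hx s s' hs hs' u₁ hu₁ u₂ hu₂ u₃ hu₃ u₄ hu₄ => ?_⟩
  have hmid := interior_subset (mem_iInter₂.1 (hV'conj hu₁.1 hu₂.2 hu₃.1 hu₄.2) x hx)
  -- `s u s'⁻¹` is the product of `s x`, `x⁻¹ u x` and `(s' x)⁻¹`, all in `V`.
  simpa [mul_assoc] using
    hVW₀ (interior_subset hs).1 hmid.1 (interior_subset hs').2 (mem_of_mem_nhds hV)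

end TopologicalGroup

section FiberBump

variable {G : Type*} [Group G] {H : Subgroup G} {b : G → ℝ} {ψ : H → ℝ}

noncomputable def fiberBump (b : G → ℝ) (ψ : H → ℝ) (g : G) (t : ℝ) : ℝ :=
  ⨆ h : H, b (h * g) * tent (t + ψ h)

lemma bddAbove_fiberBump_terms (hb : ∀ a, b a ∈ Icc 0 1) (g : G) (t : ℝ) :
    BddAbove (range fun h : H => b (h * g) * tent (t + ψ h)) :=
  ⟨1, by rintro _ ⟨h, rfl⟩; exact mul_le_one₀ (hb _).2 (tent_mem_Icc _).1 (tent_mem_Icc _).2⟩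

lemma le_fiberBump (hb : ∀ a, b a ∈ Icc 0 1) (g : G) (t : ℝ) (h : H) :
    b (h * g) * tent (t + ψ h) ≤ fiberBump b ψ g t :=
  le_ciSup (bddAbove_fiberBump_terms hb g t) h

lemma fiberBump_mem_Icc (hb : ∀ a, b a ∈ Icc 0 1) (g : G) (t : ℝ) :
    fiberBump b ψ g t ∈ Icc 0 1 :=
  ⟨(mul_nonneg (hb _).1 (tent_mem_Icc _).1).trans (le_fiberBump hb g t 1),
    ciSup_le fun _ => mul_le_one₀ (hb _).2 (tent_mem_Icc _).1 (tent_mem_Icc _).2⟩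

lemma lipschitzWith_fiberBump (hb : ∀ a, b a ∈ Icc 0 1) (g : G) :
    LipschitzWith 1 (fiberBump b ψ g) :=
  LipschitzWith.of_dist_le_mul fun s t => by
    rw [NNReal.coe_one, one_mul, Real.dist_eq, Real.dist_eq]
    refine abs_ciSup_sub_ciSup_le (bddAbove_fiberBump_terms hb g s)
      (bddAbove_fiberBump_terms hb g t) fun h => ?_
    rw [← mul_sub, abs_mul, abs_of_nonneg (hb _).1]
    calc b (h * g) * |tent (s + ψ h) - tent (t + ψ h)|
        ≤ 1 * |s + ψ h - (t + ψ h)| :=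
          mul_le_mul (hb _).2
            (lipschitzWith_tent.dist_le_mul _ _ |>.trans_eq (by simp [Real.dist_eq]))
            (abs_nonneg _) zero_le_one
      _ = |s - t| := by rw [one_mul, add_sub_add_right_eq_sub]

lemma exists_of_fiberBump_ne_zero {g : G} {t : ℝ} (hne : fiberBump b ψ g t ≠ 0) :
    ∃ h : H, b (h * g) ≠ 0 ∧ |t + ψ h| < 1 := by
  by_contra! hall
  refine hne ((iSup_congr fun h => ?_).trans ciSup_const)
  by_cases hbh : b (h * g) = 0
  · rw [hbh, zero_mul]
  · by_contra htent
    exact (hall h hbh).not_gt (abs_lt_one_of_tent_ne_zero (right_ne_zero_of_mul htent))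

lemma exists_bound_of_fiberBump_ne_zero {S : Set G} {C : ℝ}
    (hS : ∀ g ∈ S, ∀ g' ∈ S, ∀ h h' : H, b (h * g) ≠ 0 → b (h' * g') ≠ 0 → |ψ h - ψ h'| ≤ C) :
    ∃ R, ∀ g ∈ S, ∀ t, fiberBump b ψ g t ≠ 0 → |t| ≤ R := by
  by_cases hex : ∃ g' ∈ S, ∃ h' : H, b (h' * g') ≠ 0
  · obtain ⟨g', hg', h', hbh'⟩ := hex
    refine ⟨1 + C + |ψ h'|, fun g hg t ht => ?_⟩
    obtain ⟨h, hbh, hth⟩ := exists_of_fiberBump_ne_zero ht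
    have hψ := hS g hg g' hg' h h' hbh hbh'
    rw [abs_le]
    constructor <;> linarith [abs_lt.1 hth, abs_le.1 hψ, le_abs_self (ψ h'), neg_abs_le (ψ h')]
  · push Not at hex
    refine ⟨0, fun g hg t ht => ?_⟩
    obtain ⟨h, hbh, -⟩ := exists_of_fiberBump_ne_zero ht
    exact absurd (hex g hg h) hbh

lemma fiberBump_mul_left (hψ : ∀ a b : H, ψ (a * b) = ψ a + ψ b) (h₀ : H) (g : G) (t : ℝ) :
    fiberBump b ψ (h₀ * g) t = fiberBump b ψ g (t - ψ h₀) := by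
  rw [fiberBump, fiberBump,
    ← (Equiv.mulRight h₀).iSup_comp (g := fun h : H => b (h * g) * tent (t - ψ h₀ + ψ h))]
  refine iSup_congr fun h => ?_
  simp only [Equiv.coe_mulRight, Subgroup.coe_mul, hψ, mul_assoc, sub_add_add_cancel]

section LeftUniformity

variable [TopologicalSpace G] [IsTopologicalGroup G]

-- In the left uniformity `a` and `a'` are close when `a⁻¹ * a'` is near `1`, a condition that
-- left multiplication by `h : H` does not change.
attribute [local instance] IsTopologicalGroup.leftUniformSpace

lemma tendstoUniformly_fiberBump (hb : ∀ a, b a ∈ Icc 0 1) (hb_uc : UniformContinuous b)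
    (g₀ : G) : TendstoUniformly (fiberBump b ψ) (fiberBump b ψ g₀) (𝓝 g₀) := by
  rw [((𝓝 (1 : G)).basis_sets.comap fun p : G × G => p.1⁻¹ * p.2).uniformContinuous_iff
    Metric.uniformity_basis_dist] at hb_uc
  rw [Metric.tendstoUniformly_iff]
  intro ε hε
  obtain ⟨V, hV, hVb⟩ := hb_uc (ε / 2) (half_pos hε)
  filter_upwards [inv_mul_mem_nhds_of_mem_nhds_one hV g₀] with g hg t
  refine (abs_ciSup_sub_ciSup_le (bddAbove_fiberBump_terms hb g₀ t)
    (bddAbove_fiberBump_terms hb g t) fun h => ?_).trans_lt (half_lt_self hε)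
  have hh := hVb (h * g₀) (h * g) (by simpa [mul_assoc] using hg)
  simp only [mem_ofPred_eq, Real.dist_eq] at hh
  rw [← sub_mul, abs_mul, abs_of_nonneg (tent_mem_Icc _).1]
  exact (mul_le_of_le_one_right (abs_nonneg _) (tent_mem_Icc _).2).trans hh.le

end LeftUniformity

end FiberBump

section Equivariant

variable {G : Type*} [Group G] [TopologicalSpace G] {H : Subgroup G}

structure IsEquivariantBumpFamily (ψ : H → ℝ) (k : G → ℝ → ℝ) : Prop where
  nonneg : ∀ g t, 0 ≤ k g t
  continuous : ∀ g, Continuous (k g)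
  tendstoUniformly : ∀ g₀, TendstoUniformly k (k g₀) (𝓝 g₀)
  support_bounded : ∀ g₀, ∃ R, ∀ᶠ g in 𝓝 g₀, ∀ t, k g t ≠ 0 → |t| ≤ R
  exists_ne_zero : ∀ g, ∃ t, k g t ≠ 0
  mul_left : ∀ (h : H) g t, k (h * g) t = k g (t - ψ h)

namespace IsEquivariantBumpFamily

variable {ψ : H → ℝ} {k : G → ℝ → ℝ}

lemma integrable_mul (hk : IsEquivariantBumpFamily ψ k) {p : ℝ → ℝ} (hp : Continuous p)
    (g : G) : Integrable fun t => p t * k g t :=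
  let ⟨_, hR⟩ := hk.support_bounded g
  integrable_mul_of_abs_le hp (hk.continuous g) hR.self_of_nhds

lemma integral_pos (hk : IsEquivariantBumpFamily ψ k) (g : G) : 0 < ∫ t, k g t :=
  let ⟨_, ht⟩ := hk.exists_ne_zero g
  integral_pos_of_integrable_nonneg_nonzero (hk.continuous g)
    (by simpa using hk.integrable_mul (p := fun _ => 1) continuous_const g) (hk.nonneg g) ht

lemma continuous_centerOfMass (hk : IsEquivariantBumpFamily ψ k) :
    Continuous fun g => centerOfMass (k g) := by
  have hmass := continuous_integral_mul (p := fun _ => 1) continuous_const hk.continuous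
    hk.tendstoUniformly hk.support_bounded
  have hmoment := continuous_integral_mul continuous_id hk.continuous hk.tendstoUniformly
    hk.support_bounded
  simp only [one_mul] at hmass
  exact hmoment.div hmass fun g => (hk.integral_pos g).ne'

lemma centerOfMass_mul (hk : IsEquivariantBumpFamily ψ k) (h : H) (g : G) :
    centerOfMass (k (h * g)) = centerOfMass (k g) + ψ h := by
  rw [show k (h * g) = fun t => k g (t - ψ h) from funext (hk.mul_left h g)]
  have hmass := hk.integrable_mul (p := fun _ => 1) continuous_const g
  simp only [one_mul] at hmass
  exact centerOfMass_comp_sub hmass (hk.integrable_mul continuous_id g) (hk.integral_pos g).ne' _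

end IsEquivariantBumpFamily

end Equivariant

section Construction

variable {G : Type*} [Group G] [TopologicalSpace G] [IsTopologicalGroup G] {H : Subgroup G}

attribute [local instance] IsTopologicalGroup.leftUniformSpace

theorem exists_isEquivariantBumpFamily [CompactSpace (G ⧸ H)] {ψ : H → ℝ}
    (hψ : ∀ a b, ψ (a * b) = ψ a + ψ b) (hψc : Continuous ψ) :
    ∃ k : G → ℝ → ℝ, IsEquivariantBumpFamily ψ k := by
  obtain ⟨W₀, hW₀, hψW₀⟩ := Subgroup.exists_nhds_one_abs_le_one hψc (by simpa using hψ 1 1)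
  obtain ⟨W, T, hT, U, hU, hUW₀⟩ := H.exists_finset_cover_nhds_one hW₀
  choose b hb_uc hb01 hb1 hb_supp using fun x : G =>
    exists_uniformContinuous_eq_one_on {a | a * x ∈ W} (E := {p : G × G | p.1⁻¹ * p.2 ∈ U})
      (preimage_mem_comap hU)
  have hψ_close : ∀ x ∈ T, ∀ g₀ g g' : G, g₀⁻¹ * g ∈ U → g₀⁻¹ * g' ∈ U → ∀ h h' : H,
      b x (h * g) ≠ 0 → b x (h' * g') ≠ 0 → |ψ h - ψ h'| ≤ 1 := by
    intro x hx g₀ g g' hg hg' h h' hbh hbh'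
    obtain ⟨s, hs, hsU⟩ := hb_supp x _ hbh
    obtain ⟨s', hs', hs'U⟩ := hb_supp x _ hbh'
    have hψh := hψ (h * h'⁻¹) h'
    rw [inv_mul_cancel_right] at hψh
    rw [hψh, add_sub_cancel_right]
    refine hψW₀ _ ?_
    -- `h * h'⁻¹ = s * (u₁ * u₂⁻¹ * u₃ * u₄⁻¹) * s'⁻¹` for `u₁ = s⁻¹ * (h * g)`, `u₂ = g₀⁻¹ * g`,
    -- `u₃ = g₀⁻¹ * g'`, `u₄ = s'⁻¹ * (h' * g')`
    convert hUW₀ x hx s s' hs hs' _ hsU _ hg _ hg' _ hs'U using 1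
    push_cast
    group
  refine ⟨fun g t => ∑ x ∈ T, fiberBump (b x) ψ g t,
    ⟨fun g t => Finset.sum_nonneg fun x _ => (fiberBump_mem_Icc (hb01 x) g t).1,
    fun g => continuous_finsetSum T fun x _ => (lipschitzWith_fiberBump (hb01 x) g).continuous,
    fun g₀ => tendstoUniformly_finsetSum T fun x _ =>
      tendstoUniformly_fiberBump (hb01 x) (hb_uc x) g₀, fun g₀ => ?_, fun g => ?_,
    fun h g t => Finset.sum_congr rfl fun x _ => fiberBump_mul_left hψ h g t⟩⟩
  · choose! R hR using fun x (hx : x ∈ T) => exists_bound_of_fiberBump_ne_zero (ψ := ψ)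
      (S := {g | g₀⁻¹ * g ∈ U}) fun g hg g' hg' => hψ_close x hx g₀ g g' hg hg'
    refine ⟨∑ x ∈ T, |R x|, ?_⟩
    filter_upwards [inv_mul_mem_nhds_of_mem_nhds_one hU g₀] with g hg t ht
    obtain ⟨x, hx, hne⟩ := Finset.exists_ne_zero_of_sum_ne_zero ht
    exact (hR x hx g hg t hne).trans
      ((le_abs_self _).trans (Finset.single_le_sum (fun y _ => abs_nonneg (R y)) hx))
  · obtain ⟨x, hx, h, hhx⟩ := hT g
    refine ⟨-ψ h, ne_of_gt ?_⟩
    have h1 : 1 ≤ fiberBump (b x) ψ g (-ψ h) := by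
      simpa [hb1 x _ hhx] using le_fiberBump (ψ := ψ) (hb01 x) g (-ψ h) h
    exact one_pos.trans_le (h1.trans
      (Finset.single_le_sum (fun y _ => (fiberBump_mem_Icc (hb01 y) g _).1) hx))

end Construction

theorem Subgroup.exists_continuous_add_equivariant {G : Type*} [Group G] [TopologicalSpace G]
    [IsTopologicalGroup G] {H : Subgroup G} [CompactSpace (G ⧸ H)] {ψ : H → ℝ}
    (hψ : ∀ a b, ψ (a * b) = ψ a + ψ b) (hψc : Continuous ψ) :
    ∃ F : G → ℝ, Continuous F ∧ ∀ (h : H) (g : G), F (h * g) = ψ h + F g :=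
  let ⟨k, hk⟩ := exists_isEquivariantBumpFamily hψ hψc
  ⟨fun g => centerOfMass (k g), hk.continuous_centerOfMass,
    fun h g => (hk.centerOfMass_mul h g).trans (add_comm _ _)⟩

theorem extension_of_modular_homomorphism_general {G : Type*} [Group G] [TopologicalSpace G]
    [IsTopologicalGroup G]
    (H : Subgroup G)
    [CompactSpace (G ⧸ H)]
    (φ : H →* ℝ) (hφpos : ∀ h : H, 0 < φ h) (hφcont : Continuous φ) :
    ∃ m : G → ℝ, Continuous m ∧ (∀ g : G, 0 < m g) ∧
      (∀ h : H, m (h : G) = φ h) ∧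
      (∀ (h : H) (y : G), m ((h : G) * y) = φ h * m y) := by
  obtain ⟨F, hFc, hF⟩ := H.exists_continuous_add_equivariant (ψ := fun h => Real.log (φ h))
    (fun a b => by rw [map_mul, Real.log_mul (hφpos a).ne' (hφpos b).ne'])
    (hφcont.log fun h => (hφpos h).ne')
  refine ⟨fun g => Real.exp (F g - F 1), by fun_prop, fun g => Real.exp_pos _, fun h => ?_,
    fun h y => ?_⟩
  · dsimp only
    rw [← mul_one (h : G), hF, add_sub_cancel_right, Real.exp_log (hφpos h)]
  · dsimp only
    rw [hF, add_sub_assoc, Real.exp_add, Real.exp_log (hφpos h)]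

/-- Let `G` be a connected, simply connected Lie group and `H ⊆ G` a closed subgroup with
compact quotient `H\G`. Any continuous homomorphism `φ : H → (ℝ₊, ·)` trivial on the
identity component `H_e` extends to a continuous map `m : G → ℝ₊` with `m|_H = φ` and
`m(hy) = φ(h) · m(y)` for all `h ∈ H`, `y ∈ G`. -/
theorem extension_of_modular_homomorphism {G : Type*} [Group G] [TopologicalSpace G]
    [IsTopologicalGroup G] [ConnectedSpace G] [SimplyConnectedSpace G]
    (H : Subgroup G) (hHclosed : IsClosed (H : Set G))
    [CompactSpace (G ⧸ H)]
    (φ : H →* ℝ) (hφpos : ∀ h : H, 0 < φ h) (hφcont : Continuous φ)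
    (hφtriv : ∀ h : H, (h : ↥H) ∈ connectedComponent (1 : ↥H) → φ h = 1) :
    ∃ m : G → ℝ, Continuous m ∧ (∀ g : G, 0 < m g) ∧
      (∀ h : H, m (h : G) = φ h) ∧
      (∀ (h : H) (y : G), m ((h : G) * y) = φ h * m y) :=
  extension_of_modular_homomorphism_general H φ hφpos hφcont
end
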